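/- arXiv:math/0403116 — 2 statements merged into one kernel-verified Lean document; each statement's English description precedes it below -/
import Mathlib

section
/- For all rational numbers r, s, t, setting w = r^3 - s^3, x = s^3 + t^3, y = r^2*s - s^2*t + t^2*r, and z = r^2*t - s^2*r - t^2*s, one has the identity w*x*(w+x) = y^3 + z^3. -/
theorem stmt_0 (r s t : ℚ)
    (w x y z : ℚ)
    (hw : w = r^3 - s^3) (hx : x = s^3 + t^3)
    (hy : y = r^2*s - s^2*t + t^2*r) (hz : z = r^2*t - s^2*r - t^2*s) :
    w*x*(w+x) = y^3 + z^3 := by subst hw hx hy hz; ring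
end

section
/- Let k be a nonzero rational number and let x, y be rational numbers with x ≠ 0, y ≠ 0, satisfying x^3 + y^3 = k. Then u = y^2/x and v = -k/(x*y) satisfy u*v*(u+v) = k. -/
theorem stmt_4 (k x y : ℚ) (hk : k ≠ 0) (hx : x ≠ 0) (hy : y ≠ 0)
    (h : x^3 + y^3 = k)
    (u v : ℚ) (hu : u = y^2/x) (hv : v = -k/(x*y)) :
    u*v*(u+v) = k := by
  subst hu hv h
  field_simp
  ring
end
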